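/- If the initial configuration contains exactly two occupied nodes, all robots initially have the same color, and robots never change their light colors during execution, then no deterministic algorithm achieves gathering: for any such algorithm there exists a fair asynchronous scheduler under which gathering is never achieved. -/
import Mathlib


set_option autoImplicit false

/-! ### Luminous myopic robots on an anonymous ring: basic model -/

/-- A configuration of `R` luminous robots with light colors in `C`
on an anonymous ring with `N` nodes (the nodes are `ZMod N`). -/
structure Config (N R : ℕ) (C : Type) where
  pos : Fin R → ZMod N
  light : Fin R → C

namespace Gathering

variable {N R : ℕ} {C : Type}

/-- The set of light colors present at node `u`. -/
def colorsAt (cfg : Config N R C) (u : ZMod N) : Set C :=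
  {c | ∃ r, cfg.pos r = u ∧ cfg.light r = c}

/-- Node `u` hosts at least one robot. -/
def occupiedNode (cfg : Config N R C) (u : ZMod N) : Prop :=
  ∃ r, cfg.pos r = u

/-- The view from node `u` with visibility range `φ`, in orientation `dir`:
the set of colors at signed offset `k`, for `|k| ≤ φ` (and `∅` beyond the range). -/
def nodeView (φ : ℕ) (cfg : Config N R C) (u : ZMod N) (dir : Bool) : ℤ → Set C :=
  fun k => if |k| ≤ (φ : ℤ) then
      colorsAt cfg (u + (if dir then (k : ZMod N) else ((-k : ℤ) : ZMod N)))
    else ∅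

/-- Node `u` is a border node: it is occupied, all `φ` nodes on one side are
empty, and some node within distance `φ` on the other side is occupied. -/
def isBorderNode (φ : ℕ) (cfg : Config N R C) (u : ZMod N) : Prop :=
  occupiedNode cfg u ∧
  ∃ dir : Bool,
    (∀ k : ℤ, 1 ≤ k → k ≤ (φ : ℤ) →
      ¬ occupiedNode cfg (u + (if dir then (k : ZMod N) else ((-k : ℤ) : ZMod N)))) ∧
    (∃ k : ℤ, 1 ≤ k ∧ k ≤ (φ : ℤ) ∧
      occupiedNode cfg (u + (if dir then ((-k : ℤ) : ZMod N) else (k : ZMod N))))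

/-- Robot `r` is a border robot. -/
def isBorderRobot (φ : ℕ) (cfg : Config N R C) (r : Fin R) : Prop :=
  isBorderNode φ cfg (cfg.pos r)

/-- The borders of a configuration: an occupied node together with a direction
in which the next `φ` nodes are all empty (their number is always even). -/
def borderPairs (φ : ℕ) (cfg : Config N R C) : Set (ZMod N × Bool) :=
  {p | occupiedNode cfg p.1 ∧
    ∀ k : ℤ, 1 ≤ k → k ≤ (φ : ℤ) →
      ¬ occupiedNode cfg (p.1 + (if p.2 then (k : ZMod N) else ((-k : ℤ) : ZMod N)))}

/-- Ring distance between two nodes. -/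
def ringDist (u v : ZMod N) : ℕ := min (u - v).val (v - u).val

/-- Robots `r` and `r'` can observe each other. -/
def canSee (φ : ℕ) (cfg : Config N R C) (r r' : Fin R) : Prop :=
  ringDist (cfg.pos r) (cfg.pos r') ≤ φ

/-- The visibility graph of the configuration is connected. -/
def VisConnected (φ : ℕ) (cfg : Config N R C) : Prop :=
  ∀ r r' : Fin R, Relation.ReflTransGen (canSee φ cfg) r r'

/-- The span of a configuration: the least `m` such that all occupied nodes fit
in a window of `m + 1` consecutive nodes.  In a configuration with exactly two
borders this is the distance `D` between the two border nodes. -/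
noncomputable def spanDist (cfg : Config N R C) : ℕ :=
  sInf {m : ℕ | ∃ b : ZMod N, ∀ u, occupiedNode cfg u → ∃ i : ℕ, i ≤ m ∧ u = b + (i : ZMod N)}

/-! ### Algorithms and asynchronous executions -/

/-- A deterministic algorithm for luminous robots in the full-light model:
given the robot's own color and its (oriented) view, output a new color and a
movement (`+1`, `0` or `-1`, relative to the orientation of the view). -/
structure Algo (C : Type) where
  out : C → (ℤ → Set C) → C × SignType

/-- The destination of a movement `m` from node `u`, for view orientation `dir`. -/
def moveTarget (u : ZMod N) (dir : Bool) (m : SignType) : ZMod N :=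
  u + (if dir then ((m : ℤ) : ZMod N) else ((-(m : ℤ) : ℤ) : ZMod N))

/-- An execution of algorithm `A` under a fair asynchronous scheduler.
At each instant every robot either stays idle, performs a Look (together with
the deterministic Compute, recording a plan: a new color and a destination
node; the orientation of the snapshot is chosen adversarially, as robots are
disoriented), becomes visible with its new color (end of the Compute phase,
keeping its pending plan), or performs its atomic Move, completing the cycle.
A robot `r` with `plan t r ≠ none` is a robot whose view may be outdated. -/
structure AsyncExec (N R : ℕ) (C : Type) (φ : ℕ) (A : Algo C) where
  cfg : ℕ → Config N R C
  plan : ℕ → Fin R → Option (C × ZMod N)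
  init_plan : ∀ r, plan 0 r = none
  step : ∀ (t : ℕ) (r : Fin R),
      ((cfg (t+1)).pos r = (cfg t).pos r ∧ (cfg (t+1)).light r = (cfg t).light r ∧
        plan (t+1) r = plan t r)
    ∨ (plan t r = none ∧ (cfg (t+1)).pos r = (cfg t).pos r ∧
        (cfg (t+1)).light r = (cfg t).light r ∧
        ∃ dir : Bool,
          plan (t+1) r =
            some ((A.out ((cfg t).light r) (nodeView φ (cfg t) ((cfg t).pos r) dir)).1,
              moveTarget ((cfg t).pos r) dir
                (A.out ((cfg t).light r) (nodeView φ (cfg t) ((cfg t).pos r) dir)).2))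
    ∨ (∃ c u, plan t r = some (c, u) ∧ (cfg (t+1)).pos r = (cfg t).pos r ∧
        (cfg (t+1)).light r = c ∧ plan (t+1) r = some (c, u))
    ∨ (∃ c u, plan t r = some (c, u) ∧ (cfg (t+1)).pos r = u ∧
        (cfg (t+1)).light r = c ∧ plan (t+1) r = none)
  fair : ∀ (r : Fin R) (t : ℕ), ∃ t', t ≤ t' ∧ plan t' r ≠ none ∧ plan (t'+1) r = none

/-- The execution achieves gathering: from some time on, all robots occupy a
single node and remain there forever. -/
def AchievesGathering {N R : ℕ} {C : Type} {φ : ℕ} {A : Algo C}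
    (e : AsyncExec N R C φ A) : Prop :=
  ∃ (t : ℕ) (u : ZMod N), ∀ t', t ≤ t' → ∀ r, (e.cfg t').pos r = u

/-! ### Initial configurations -/

/-- The robots occupy a segment `G'` of `Minit` nodes with base (border) node
`b`: both endpoints of the segment are occupied and are borders (the `φ` nodes
beyond each endpoint are empty), every occupied node lies in the segment,
consecutive occupied nodes are at distance at most `φ` (`H_init ≤ φ`, i.e. the
visibility graph is connected), and `Oinit` is the number of occupied nodes of
the segment. -/
def SegmentInitOn (φ : ℕ) (cfg : Config N R C) (b : ZMod N) (Minit Oinit : ℕ) : Prop :=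
  2 ≤ Minit ∧
  occupiedNode cfg b ∧ occupiedNode cfg (b + ((Minit - 1 : ℕ) : ZMod N)) ∧
  (∀ u, occupiedNode cfg u → ∃ i : ℕ, i < Minit ∧ u = b + (i : ZMod N)) ∧
  (∀ k : ℕ, 1 ≤ k → k ≤ φ →
    ¬ occupiedNode cfg (b - (k : ZMod N)) ∧
    ¬ occupiedNode cfg (b + ((Minit - 1 : ℕ) : ZMod N) + (k : ZMod N))) ∧
  (∀ i : ℕ, i + 1 < Minit → occupiedNode cfg (b + (i : ZMod N)) →
    ∃ j : ℕ, i < j ∧ j ≤ i + φ ∧ j < Minit ∧ occupiedNode cfg (b + (j : ZMod N))) ∧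
  Oinit = {i : Fin Minit | occupiedNode cfg (b + ((i : ℕ) : ZMod N))}.ncard

/-- Admissible initial configuration: all robots have the color `white`, and
the robots occupy a segment with two borders and connected visibility graph. -/
def AdmissibleInit (φ : ℕ) (cfg : Config N R C) (white : C) (Minit Oinit : ℕ) : Prop :=
  (∀ r, cfg.light r = white) ∧ ∃ b : ZMod N, SegmentInitOn φ cfg b Minit Oinit

/-! ### Edge-view symmetry and cautiousness -/

/-- Robots `r1` and `r2` are indistinguishable: they have the same color and
the same view (up to reversal, as robots are disoriented). -/
def viewsEq (φ : ℕ) (cfg : Config N R C) (r1 r2 : Fin R) : Prop :=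
  cfg.light r1 = cfg.light r2 ∧
  (nodeView φ cfg (cfg.pos r1) true = nodeView φ cfg (cfg.pos r2) true ∨
   nodeView φ cfg (cfg.pos r1) true = nodeView φ cfg (cfg.pos r2) false)

/-- Definition 20: a configuration is edge-view-symmetric if at least two
distinct nodes host robots and there is an edge `(u_i, u_{i+1})` such that for
every `k ≥ 0`, every robot at `u_{i-k}` has an indistinguishable counterpart at
`u_{i+k+1}`. -/
def EdgeViewSymmetric (φ : ℕ) (cfg : Config N R C) : Prop :=
  (∃ u v : ZMod N, u ≠ v ∧ occupiedNode cfg u ∧ occupiedNode cfg v) ∧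
  ∃ i : ZMod N, ∀ (k : ℕ) (r1 : Fin R), cfg.pos r1 = i - (k : ZMod N) →
    ∃ r2 : Fin R, cfg.pos r2 = i + (k : ZMod N) + 1 ∧ viewsEq φ cfg r1 r2

/-- Definition 23: an algorithm is cautious if robots only ever move toward
other occupied nodes (they never expand the span of the visibility graph). -/
def Cautious (φ : ℕ) (A : Algo C) : Prop :=
  ∀ (c : C) (v : ℤ → Set C),
    ((A.out c v).2 = 1 → ∃ k : ℤ, 1 ≤ k ∧ k ≤ (φ : ℤ) ∧ v k ≠ ∅) ∧
    ((A.out c v).2 = -1 → ∃ k : ℤ, 1 ≤ k ∧ k ≤ (φ : ℤ) ∧ v (-k) ≠ ∅)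

end Gathering

namespace Gathering

/-! ### Algorithm 1 (three colors) -/

/-- The three light colors of Algorithm 1. -/
inductive C3 : Type
  | White
  | Red
  | Blue
deriving DecidableEq

open Classical in
/-- The rules of Algorithm 1, for a view oriented so that the `φ` nodes at
negative offsets are empty (the observing robot is a border robot and the
positive direction points inward), in priority order
R1, R2a, R2b, R3a, R3b, R4a, R4b, R5. -/
noncomputable def algo1Rules (φ : ℕ) (c : C3) (v : ℤ → Set C3) : C3 × SignType :=
  -- R1 : ∅^φ [W!] (¬∅^φ)  ::  R
  if c = C3.White ∧ v 0 = {C3.White} then (C3.Red, 0)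
  -- R2a : ∅^φ [R!] (∅, B!) (¬(∅^(φ-1)))  ::  B, →
  else if c = C3.Red ∧ v 0 = {C3.Red} ∧ (v 1 = ∅ ∨ v 1 = {C3.Blue}) ∧
      ¬ (∀ k : ℤ, 2 ≤ k → k ≤ (φ : ℤ) → v k = ∅) then (C3.Blue, 1)
  -- R2b : ∅^φ [R!] (W) (?^(φ-1))  ::  B, →
  else if c = C3.Red ∧ v 0 = {C3.Red} ∧ C3.White ∈ v 1 ∧
      (∀ k : ℤ, 2 ≤ k → k ≤ (φ : ℤ) → v k ≠ ∅) then (C3.Blue, 1)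
  -- R3a : ∅^φ [B!] (∅, R!) (¬(∅^(φ-1)))  ::  R, →
  else if c = C3.Blue ∧ v 0 = {C3.Blue} ∧ (v 1 = ∅ ∨ v 1 = {C3.Red}) ∧
      ¬ (∀ k : ℤ, 2 ≤ k → k ≤ (φ : ℤ) → v k = ∅) then (C3.Red, 1)
  -- R3b : ∅^φ [B!] (W) (?^(φ-1))  ::  R, →
  else if c = C3.Blue ∧ v 0 = {C3.Blue} ∧ C3.White ∈ v 1 ∧
      (∀ k : ℤ, 2 ≤ k → k ≤ (φ : ℤ) → v k ≠ ∅) then (C3.Red, 1)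
  -- R4a : ∅^φ [R [W]] (¬∅^φ)  ::  R
  else if c = C3.White ∧ C3.Red ∈ v 0 then (C3.Red, 0)
  -- R4b : ∅^φ [B [W]] (¬∅^φ)  ::  B
  else if c = C3.White ∧ C3.Blue ∈ v 0 then (C3.Blue, 0)
  -- R5 : ∅^φ [R!] (B!) (∅^(φ-1))  ::  B, →
  else if c = C3.Red ∧ v 0 = {C3.Red} ∧ v 1 = {C3.Blue} ∧
      (∀ k : ℤ, 2 ≤ k → k ≤ (φ : ℤ) → v k = ∅) then (C3.Blue, 1)
  else (c, 0)

open Classical in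
/-- Algorithm 1: the rules are applied in the orientation in which the `φ`
nearest nodes on one side are all empty.  A robot seeing no other robot does
nothing (rule R0), and no rule is enabled for a non-border robot. -/
noncomputable def algo1 (φ : ℕ) : Algo C3 where
  out := fun c v =>
    if (∀ k : ℤ, 1 ≤ k → k ≤ (φ : ℤ) → v (-k) = ∅) ∧
       (∀ k : ℤ, 1 ≤ k → k ≤ (φ : ℤ) → v k = ∅) then (c, 0)
    else if ∀ k : ℤ, 1 ≤ k → k ≤ (φ : ℤ) → v (-k) = ∅ then algo1Rules φ c v
    else if ∀ k : ℤ, 1 ≤ k → k ≤ (φ : ℤ) → v k = ∅ then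
      ((algo1Rules φ c (fun k => v (-k))).1, -(algo1Rules φ c (fun k => v (-k))).2)
    else (c, 0)

/-! ### Algorithm 2 (four colors) -/

/-- The four light colors of Algorithm 2. -/
inductive C4 : Type
  | White
  | Red
  | Blue
  | Purple
deriving DecidableEq

open Classical in
/-- The rules of Algorithm 2, for a view oriented so that the `φ` nodes at
negative offsets are empty, in priority order
R1, R2a-1, R2a-2, R2b, R3a-1, R3a-2, R3b, R4a, R4b, R5a, R5b-1, R5b-2, R5b-3. -/
noncomputable def algo2Rules (φ : ℕ) (c : C4) (v : ℤ → Set C4) : C4 × SignType :=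
  -- R1 : ∅^φ [W!] (¬∅^φ)  ::  R
  if c = C4.White ∧ v 0 = {C4.White} then (C4.Red, 0)
  -- R2a-1 : ∅^φ [R!] (∅) (¬(∅^(φ-1)))  ::  →
  else if c = C4.Red ∧ v 0 = {C4.Red} ∧ v 1 = ∅ ∧
      ¬ (∀ k : ℤ, 2 ≤ k → k ≤ (φ : ℤ) → v k = ∅) then (C4.Red, 1)
  -- R2a-2 : ∅^φ [R!] (¬W, R) (¬(∅^(φ-1)))  ::  →
  else if c = C4.Red ∧ v 0 = {C4.Red} ∧ (C4.Red ∈ v 1 ∧ C4.White ∉ v 1) ∧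
      ¬ (∀ k : ℤ, 2 ≤ k → k ≤ (φ : ℤ) → v k = ∅) then (C4.Red, 1)
  -- R2b : ∅^φ [R!] (W) (?^(φ-1))  ::  B, →
  else if c = C4.Red ∧ v 0 = {C4.Red} ∧ C4.White ∈ v 1 ∧
      (∀ k : ℤ, 2 ≤ k → k ≤ (φ : ℤ) → v k ≠ ∅) then (C4.Blue, 1)
  -- R3a-1 : ∅^φ [B!] (∅) (¬(∅^(φ-1)))  ::  →
  else if c = C4.Blue ∧ v 0 = {C4.Blue} ∧ v 1 = ∅ ∧
      ¬ (∀ k : ℤ, 2 ≤ k → k ≤ (φ : ℤ) → v k = ∅) then (C4.Blue, 1)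
  -- R3a-2 : ∅^φ [B!] (¬W, B) (¬(∅^(φ-1)))  ::  →
  else if c = C4.Blue ∧ v 0 = {C4.Blue} ∧ (C4.Blue ∈ v 1 ∧ C4.White ∉ v 1) ∧
      ¬ (∀ k : ℤ, 2 ≤ k → k ≤ (φ : ℤ) → v k = ∅) then (C4.Blue, 1)
  -- R3b : ∅^φ [B!] (W) (?^(φ-1))  ::  R, →
  else if c = C4.Blue ∧ v 0 = {C4.Blue} ∧ C4.White ∈ v 1 ∧
      (∀ k : ℤ, 2 ≤ k → k ≤ (φ : ℤ) → v k ≠ ∅) then (C4.Red, 1)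
  -- R4a : ∅^φ [R [W]] (¬∅^φ)  ::  R
  else if c = C4.White ∧ C4.Red ∈ v 0 then (C4.Red, 0)
  -- R4b : ∅^φ [B [W]] (¬∅^φ)  ::  B
  else if c = C4.White ∧ C4.Blue ∈ v 0 then (C4.Blue, 0)
  -- R5a : ∅^φ [?] (P) (∅^(φ-1))  ::  →
  else if C4.Purple ∈ v 1 ∧ (∀ k : ℤ, 2 ≤ k → k ≤ (φ : ℤ) → v k = ∅) then (c, 1)
  -- R5b-1 : ∅^φ [B!] (R!) (∅^(φ-1))  ::  P
  else if c = C4.Blue ∧ v 0 = {C4.Blue} ∧ v 1 = {C4.Red} ∧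
      (∀ k : ℤ, 2 ≤ k → k ≤ (φ : ℤ) → v k = ∅) then (C4.Purple, 0)
  -- R5b-2 : ∅^φ [B!] (R, B) (∅^(φ-1))  ::  P
  else if c = C4.Blue ∧ v 0 = {C4.Blue} ∧ (C4.Red ∈ v 1 ∧ C4.Blue ∈ v 1) ∧
      (∀ k : ℤ, 2 ≤ k → k ≤ (φ : ℤ) → v k = ∅) then (C4.Purple, 0)
  -- R5b-3 : ∅^φ [R [B]] (R!) (∅^(φ-1))  ::  P
  else if c = C4.Blue ∧ C4.Red ∈ v 0 ∧ v 1 = {C4.Red} ∧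
      (∀ k : ℤ, 2 ≤ k → k ≤ (φ : ℤ) → v k = ∅) then (C4.Purple, 0)
  else (c, 0)

open Classical in
/-- Algorithm 2: the rules are applied in the orientation in which the `φ`
nearest nodes on one side are all empty.  A robot seeing no other robot does
nothing (rule R0), and no rule is enabled for a non-border robot. -/
noncomputable def algo2 (φ : ℕ) : Algo C4 where
  out := fun c v =>
    if (∀ k : ℤ, 1 ≤ k → k ≤ (φ : ℤ) → v (-k) = ∅) ∧
       (∀ k : ℤ, 1 ≤ k → k ≤ (φ : ℤ) → v k = ∅) then (c, 0)
    else if ∀ k : ℤ, 1 ≤ k → k ≤ (φ : ℤ) → v (-k) = ∅ then algo2Rules φ c v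
    else if ∀ k : ℤ, 1 ≤ k → k ≤ (φ : ℤ) → v k = ∅ then
      ((algo2Rules φ c (fun k => v (-k))).1, -(algo2Rules φ c (fun k => v (-k))).2)
    else (c, 0)

/-- `#O_W`: the number of nodes hosting a White robot that are not border
nodes. -/
noncomputable def numWhiteNonBorder {N R : ℕ} (φ : ℕ) (cfg : Config N R C4) : ℕ :=
  {u : ZMod N | C4.White ∈ colorsAt cfg u ∧ ¬ isBorderNode φ cfg u}.ncard

end Gathering


namespace Gathering

/-! ### Auxiliary constructions for the impossibility proof -/

section TwoOccAux

variable {C : Type}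

private lemma Config.ext' {N R : ℕ} {a b : Config N R C}
    (h1 : a.pos = b.pos) (h2 : a.light = b.light) : a = b := by
  cases a; cases b; cases h1; cases h2; rfl

/-- The common view in a two-occupied-nodes all-same-color configuration,
as seen from the node `u` with `d = v - u` the offset of the other node. -/
noncomputable def Wview (N phi : ℕ) (w : C) (d : ZMod N) : ℤ → Set C :=
  fun k => if |k| ≤ (phi : ℤ) then
    (if (k : ZMod N) = 0 ∨ (k : ZMod N) = d then ({w} : Set C) else ∅) else ∅

/-- The move computed by `A` on the symmetric view. -/
noncomputable def mzv (N phi : ℕ) (A : Algo C) (w : C) (d : ZMod N) : ZMod N :=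
  (((A.out w (Wview N phi w d)).2 : ℤ) : ZMod N)

/-- The adversarial round state: positions of the two groups and whose turn
it is to move. -/
noncomputable def st (N phi : ℕ) (A : Algo C) (w : C) (u0 v0 : ZMod N) :
    ℕ → ZMod N × ZMod N × Bool
  | 0 => (u0, v0, true)
  | n + 1 =>
    let s := st N phi A w u0 v0 n
    let m := mzv N phi A w (s.2.1 - s.1)
    let sw : Bool := decide (m = s.2.1 - s.1)
    ((if sw || s.2.2 then s.1 + m else s.1),
     (if sw || !s.2.2 then s.2.1 - m else s.2.1),
     (if sw then s.2.2 else !s.2.2))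

variable (N phi : ℕ) (A : Algo C) (w : C) (u0 v0 : ZMod N)

noncomputable def Un (n : ℕ) : ZMod N := (st N phi A w u0 v0 n).1
noncomputable def Vn (n : ℕ) : ZMod N := (st N phi A w u0 v0 n).2.1
noncomputable def Bn (n : ℕ) : Bool := (st N phi A w u0 v0 n).2.2
noncomputable def mRnd (n : ℕ) : ZMod N :=
  mzv N phi A w (Vn N phi A w u0 v0 n - Un N phi A w u0 v0 n)
noncomputable def swp (n : ℕ) : Bool :=
  decide (mRnd N phi A w u0 v0 n = Vn N phi A w u0 v0 n - Un N phi A w u0 v0 n)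
noncomputable def mvA (n : ℕ) : Bool :=
  swp N phi A w u0 v0 n || Bn N phi A w u0 v0 n
noncomputable def mvB (n : ℕ) : Bool :=
  swp N phi A w u0 v0 n || !(Bn N phi A w u0 v0 n)

lemma Un_zero : Un N phi A w u0 v0 0 = u0 := rfl
lemma Vn_zero : Vn N phi A w u0 v0 0 = v0 := rfl
lemma Bn_zero : Bn N phi A w u0 v0 0 = true := rfl

lemma Un_succ (n : ℕ) : Un N phi A w u0 v0 (n + 1) =
    (if mvA N phi A w u0 v0 n
      then Un N phi A w u0 v0 n + mRnd N phi A w u0 v0 n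
      else Un N phi A w u0 v0 n) := rfl

lemma Vn_succ (n : ℕ) : Vn N phi A w u0 v0 (n + 1) =
    (if mvB N phi A w u0 v0 n
      then Vn N phi A w u0 v0 n - mRnd N phi A w u0 v0 n
      else Vn N phi A w u0 v0 n) := rfl

lemma Bn_succ (n : ℕ) : Bn N phi A w u0 v0 (n + 1) =
    (if swp N phi A w u0 v0 n then Bn N phi A w u0 v0 n
      else !(Bn N phi A w u0 v0 n)) := rfl

/-- The two occupied nodes stay distinct forever. -/
lemma st_ne (h0 : u0 ≠ v0) : ∀ n, Un N phi A w u0 v0 n ≠ Vn N phi A w u0 v0 n := by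
  intro n
  induction n with
  | zero => exact h0
  | succ n ih =>
    rw [Un_succ, Vn_succ]
    by_cases hsw : swp N phi A w u0 v0 n = true
    · have hm : mRnd N phi A w u0 v0 n = Vn N phi A w u0 v0 n - Un N phi A w u0 v0 n :=
        of_decide_eq_true hsw
      have hA' : mvA N phi A w u0 v0 n = true := by simp [mvA, hsw]
      have hB' : mvB N phi A w u0 v0 n = true := by simp [mvB, hsw]
      rw [hA', hB', if_pos rfl, if_pos rfl, hm]
      intro h
      apply ih
      have : Un N phi A w u0 v0 n + (Vn N phi A w u0 v0 n - Un N phi A w u0 v0 n)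
          = Vn N phi A w u0 v0 n := by ring
      rw [this] at h
      have : Vn N phi A w u0 v0 n - (Vn N phi A w u0 v0 n - Un N phi A w u0 v0 n)
          = Un N phi A w u0 v0 n := by ring
      rw [this] at h
      exact (ih h.symm).elim
    · have hsw' : swp N phi A w u0 v0 n = false := by
        cases h : swp N phi A w u0 v0 n
        · rfl
        · exact absurd h hsw
      have hm : mRnd N phi A w u0 v0 n ≠ Vn N phi A w u0 v0 n - Un N phi A w u0 v0 n := by
        intro h; exact hsw (decide_eq_true h)
      cases hb : Bn N phi A w u0 v0 n
      · have hA' : mvA N phi A w u0 v0 n = false := by simp [mvA, hsw', hb]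
        have hB' : mvB N phi A w u0 v0 n = true := by simp [mvB, hsw', hb]
        rw [hA', hB', if_neg (by simp), if_pos rfl]
        intro h
        apply hm
        rw [h]; ring
      · have hA' : mvA N phi A w u0 v0 n = true := by simp [mvA, hsw', hb]
        have hB' : mvB N phi A w u0 v0 n = false := by simp [mvB, hsw', hb]
        rw [hA', hB', if_pos rfl, if_neg (by simp)]
        intro h
        apply hm
        rw [← h]; ring

/-- Every group moves at least once in any two consecutive rounds. -/
lemma mvA_or (n : ℕ) :
    mvA N phi A w u0 v0 n = true ∨ mvA N phi A w u0 v0 (n + 1) = true := by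
  by_cases h : mvA N phi A w u0 v0 n = true
  · exact Or.inl h
  · right
    have hsw : swp N phi A w u0 v0 n = false := by
      cases hs : swp N phi A w u0 v0 n
      · rfl
      · exact absurd (by simp [mvA, hs]) h
    have hb : Bn N phi A w u0 v0 n = false := by
      cases hbn : Bn N phi A w u0 v0 n
      · rfl
      · exact absurd (by simp [mvA, hbn]) h
    have : Bn N phi A w u0 v0 (n + 1) = true := by
      rw [Bn_succ, hsw, if_neg (by simp), hb]; rfl
    simp [mvA, this]

lemma mvB_or (n : ℕ) :
    mvB N phi A w u0 v0 n = true ∨ mvB N phi A w u0 v0 (n + 1) = true := by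
  by_cases h : mvB N phi A w u0 v0 n = true
  · exact Or.inl h
  · right
    have hsw : swp N phi A w u0 v0 n = false := by
      cases hs : swp N phi A w u0 v0 n
      · rfl
      · exact absurd (by simp [mvB, hs]) h
    have hb : Bn N phi A w u0 v0 n = true := by
      cases hbn : Bn N phi A w u0 v0 n
      · exact absurd (by simp [mvB, hbn]) h
      · rfl
    have : Bn N phi A w u0 v0 (n + 1) = false := by
      rw [Bn_succ, hsw, if_neg (by simp), hb]; rfl
    simp [mvB, this]

variable {R : ℕ} (g : Fin R → Bool)

/-- The adversarial configuration at time `t` (round `t / 2`). -/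
noncomputable def cfgA (t : ℕ) : Config N R C :=
  { pos := fun r => if g r then Un N phi A w u0 v0 (t / 2) else Vn N phi A w u0 v0 (t / 2),
    light := fun _ => w }

/-- The adversarial pending plans at time `t`. -/
noncomputable def planA (t : ℕ) (r : Fin R) : Option (C × ZMod N) :=
  if t % 2 = 1 ∧ (if g r then mvA N phi A w u0 v0 (t / 2)
                  else mvB N phi A w u0 v0 (t / 2)) = true
  then some (w, if g r then Un N phi A w u0 v0 (t / 2) + mRnd N phi A w u0 v0 (t / 2)
              else Vn N phi A w u0 v0 (t / 2) - mRnd N phi A w u0 v0 (t / 2))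
  else none

/-- In a configuration whose occupied nodes are exactly `u` and `v` and where
all lights are `w`, the view from `u` oriented forward and the view from `v`
oriented backward both equal the canonical symmetric view. -/
lemma nodeView_two {R' : ℕ} (cfg : Config N R' C) (u v : ZMod N)
    (hl : ∀ r, cfg.light r = w)
    (hp : ∀ r, cfg.pos r = u ∨ cfg.pos r = v)
    (hu : ∃ r, cfg.pos r = u) (hv : ∃ r, cfg.pos r = v) :
    nodeView phi cfg u true = Wview N phi w (v - u) ∧
    nodeView phi cfg v false = Wview N phi w (v - u) := by
  have hcol : ∀ x : ZMod N, colorsAt cfg x =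
      (if x = u ∨ x = v then ({w} : Set C) else ∅) := by
    intro x
    split
    · rename_i hx
      ext c
      simp only [colorsAt, Set.mem_setOf_eq, Set.mem_singleton_iff]
      constructor
      · rintro ⟨r, _, rfl⟩; exact hl r
      · rintro rfl
        rcases hx with rfl | rfl
        · obtain ⟨r, hr⟩ := hu; exact ⟨r, hr, hl r⟩
        · obtain ⟨r, hr⟩ := hv; exact ⟨r, hr, hl r⟩
    · rename_i hx
      ext c
      simp only [colorsAt, Set.mem_setOf_eq, Set.mem_empty_iff_false, iff_false]
      rintro ⟨r, hr, -⟩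
      rcases hp r with h | h
      · exact hx (Or.inl (hr ▸ h))
      · exact hx (Or.inr (hr ▸ h))
  constructor
  · funext k
    simp only [nodeView, if_true, Wview]
    by_cases hk : |k| ≤ (phi : ℤ)
    · rw [if_pos hk, if_pos hk, hcol]
      have hiff : (u + (k : ZMod N) = u ∨ u + (k : ZMod N) = v) ↔
          ((k : ZMod N) = 0 ∨ (k : ZMod N) = v - u) := by
        constructor
        · rintro (h | h)
          · left
            have : (k : ZMod N) = (u + (k : ZMod N)) - u := by ring
            rw [h] at this; rw [this]; ring
          · right
            have : (k : ZMod N) = (u + (k : ZMod N)) - u := by ring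
            rw [h] at this; exact this
        · rintro (h | h)
          · left; rw [h]; ring
          · right; rw [h]; ring
      simp only [hiff]
    · rw [if_neg hk, if_neg hk]
  · funext k
    simp only [nodeView, Wview, Bool.false_eq_true, if_false]
    by_cases hk : |k| ≤ (phi : ℤ)
    · rw [if_pos hk, if_pos hk, hcol]
      have hcast : ((-k : ℤ) : ZMod N) = -(k : ZMod N) := by push_cast; ring
      rw [hcast]
      have hiff : (v + -(k : ZMod N) = u ∨ v + -(k : ZMod N) = v) ↔
          ((k : ZMod N) = 0 ∨ (k : ZMod N) = v - u) := by
        constructor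
        · rintro (h | h)
          · right
            have : (k : ZMod N) = v - (v + -(k : ZMod N)) := by ring
            rw [h] at this; rw [this]
          · left
            have : (k : ZMod N) = v - (v + -(k : ZMod N)) := by ring
            rw [h] at this
            rw [this]; ring
        · rintro (h | h)
          · right; rw [h]; ring
          · left; rw [h]; ring
      simp only [hiff]
    · rw [if_neg hk, if_neg hk]

end TwoOccAux

/-- If the initial configuration contains exactly two occupied nodes, all
robots initially have the same color, and robots never change their light
colors, then no deterministic algorithm achieves gathering: there is a fair
asynchronous scheduler under which gathering is never achieved. -/
theorem two_occupied_no_color_change_impossible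
    (N R phi : ℕ) (C : Type) (hN : 3 ≤ N) (hphi : 1 ≤ phi)
    (A : Algo C) (hA : ∀ (c : C) (v : ℤ → Set C), (A.out c v).1 = c)
    (cfg0 : Config N R C)
    (htwo : ∃ u v : ZMod N, u ≠ v ∧ occupiedNode cfg0 u ∧ occupiedNode cfg0 v ∧
      ∀ w, occupiedNode cfg0 w → w = u ∨ w = v)
    (hmono : ∀ r r' : Fin R, cfg0.light r = cfg0.light r') :
    ∃ e : AsyncExec N R C phi A, e.cfg 0 = cfg0 ∧ ¬ AchievesGathering e := by
  classical
  obtain ⟨u0, v0, huv, ⟨rA, hrA⟩, ⟨rB, hrB⟩, hclass⟩ := htwo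
  set w : C := cfg0.light rA with hw
  set g : Fin R → Bool := fun r => decide (cfg0.pos r = u0) with hg
  have hgA : g rA = true := decide_eq_true hrA
  have hgB : g rB = false := by
    apply decide_eq_false
    rw [hrB]
    exact fun h => huv h.symm
  have hne := st_ne N phi A w u0 v0 huv
  -- views at every time step
  have hviews : ∀ t : ℕ,
      nodeView phi (cfgA N phi A w u0 v0 g t) (Un N phi A w u0 v0 (t / 2)) true
        = Wview N phi w (Vn N phi A w u0 v0 (t / 2) - Un N phi A w u0 v0 (t / 2)) ∧
      nodeView phi (cfgA N phi A w u0 v0 g t) (Vn N phi A w u0 v0 (t / 2)) false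
        = Wview N phi w (Vn N phi A w u0 v0 (t / 2) - Un N phi A w u0 v0 (t / 2)) := by
    intro t
    apply nodeView_two
    · intro r; rfl
    · intro r
      by_cases h : g r = true
      · exact Or.inl (by simp [cfgA, h])
      · exact Or.inr (by simp [cfgA, h])
    · exact ⟨rA, by simp [cfgA, hgA]⟩
    · exact ⟨rB, by simp [cfgA, hgB]⟩
  have hposA : ∀ (t : ℕ) (r : Fin R), g r = true →
      (cfgA N phi A w u0 v0 g t).pos r = Un N phi A w u0 v0 (t / 2) := by
    intro t r h; simp [cfgA, h]
  have hposB : ∀ (t : ℕ) (r : Fin R), ¬ g r = true →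
      (cfgA N phi A w u0 v0 g t).pos r = Vn N phi A w u0 v0 (t / 2) := by
    intro t r h; simp [cfgA, h]
  refine ⟨{ cfg := cfgA N phi A w u0 v0 g,
            plan := planA N phi A w u0 v0 g,
            init_plan := ?_, step := ?_, fair := ?_ }, ?_, ?_⟩
  · -- init_plan
    intro r
    simp [planA]
  · -- step
    intro t r
    rcases Nat.mod_two_eq_zero_or_one t with ht | ht
    · -- even time: Look or idle
      have h12 : (t + 1) / 2 = t / 2 := by omega
      have h1m : (t + 1) % 2 = 1 := by omega
      have e1 : planA N phi A w u0 v0 g t r = none := by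
        rw [planA, if_neg]; rintro ⟨h, -⟩; omega
      by_cases hmv : (if g r then mvA N phi A w u0 v0 (t / 2)
          else mvB N phi A w u0 v0 (t / 2)) = true
      · refine Or.inr (Or.inl ⟨e1, by simp [cfgA, h12], rfl, g r, ?_⟩)
        have hplan : planA N phi A w u0 v0 g (t + 1) r
            = some (w, if g r then
                Un N phi A w u0 v0 (t / 2) + mRnd N phi A w u0 v0 (t / 2)
              else Vn N phi A w u0 v0 (t / 2) - mRnd N phi A w u0 v0 (t / 2)) := by
          rw [planA, h12, if_pos ⟨h1m, hmv⟩]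
        rw [hplan]
        have hlight : (cfgA N phi A w u0 v0 g t).light r = w := rfl
        by_cases hgr : g r = true
        · rw [hgr, hposA t r hgr, hlight, (hviews t).1, hA]
          simp [moveTarget, mRnd, mzv]
        · rw [hposB t r hgr, hlight]
          have hgr' : g r = false := by
            cases h : g r
            · rfl
            · exact absurd h hgr
          rw [hgr', (hviews t).2, hA]
          simp only [if_neg (by simp : ¬ (false = true)), moveTarget]
          congr 2
          rw [mRnd, mzv]
          push_cast
          ring
      · refine Or.inl ⟨by simp [cfgA, h12], rfl, ?_⟩
        have e2 : planA N phi A w u0 v0 g (t + 1) r = none := by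
          rw [planA, if_neg]
          rintro ⟨-, h⟩
          rw [h12] at h
          exact hmv h
        rw [e1, e2]
    · -- odd time: Move or idle
      have h12 : (t + 1) / 2 = t / 2 + 1 := by omega
      have h1m : (t + 1) % 2 = 0 := by omega
      have e2 : planA N phi A w u0 v0 g (t + 1) r = none := by
        rw [planA, if_neg]; rintro ⟨h, -⟩; omega
      by_cases hmv : (if g r then mvA N phi A w u0 v0 (t / 2)
          else mvB N phi A w u0 v0 (t / 2)) = true
      · refine Or.inr (Or.inr (Or.inr ⟨w,
          (if g r then Un N phi A w u0 v0 (t / 2) + mRnd N phi A w u0 v0 (t / 2)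
            else Vn N phi A w u0 v0 (t / 2) - mRnd N phi A w u0 v0 (t / 2)),
          ?_, ?_, rfl, e2⟩))
        · rw [planA, if_pos ⟨ht, hmv⟩]
        · by_cases hgr : g r = true
          · have hmva : mvA N phi A w u0 v0 (t / 2) = true := by rwa [if_pos hgr] at hmv
            rw [hposA (t + 1) r hgr, h12, Un_succ, if_pos hmva, if_pos hgr]
          · have hmvb : mvB N phi A w u0 v0 (t / 2) = true := by rwa [if_neg hgr] at hmv
            rw [hposB (t + 1) r hgr, h12, Vn_succ, if_pos hmvb, if_neg hgr]
      · refine Or.inl ⟨?_, rfl, ?_⟩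
        · by_cases hgr : g r = true
          · have hmva : ¬ mvA N phi A w u0 v0 (t / 2) = true := by
              rwa [if_pos hgr] at hmv
            rw [hposA (t + 1) r hgr, hposA t r hgr, h12, Un_succ, if_neg hmva]
          · have hmvb : ¬ mvB N phi A w u0 v0 (t / 2) = true := by
              rwa [if_neg hgr] at hmv
            rw [hposB (t + 1) r hgr, hposB t r hgr, h12, Vn_succ, if_neg hmvb]
        · have e1 : planA N phi A w u0 v0 g t r = none := by
            rw [planA, if_neg]
            rintro ⟨-, h⟩
            exact hmv h
          rw [e1, e2]
  · -- fair
    intro r t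
    have key : ∀ n : ℕ,
        (if g r then mvA N phi A w u0 v0 n else mvB N phi A w u0 v0 n) = true →
        planA N phi A w u0 v0 g (2 * n + 1) r ≠ none ∧
        planA N phi A w u0 v0 g (2 * n + 1 + 1) r = none := by
      intro n hn
      have e1 : (2 * n + 1) % 2 = 1 := by omega
      have e2 : (2 * n + 1) / 2 = n := by omega
      constructor
      · rw [planA, e2, if_pos ⟨e1, hn⟩]
        simp
      · rw [planA, if_neg]
        rintro ⟨h, -⟩
        omega
    by_cases hgr : g r = true
    · rcases mvA_or N phi A w u0 v0 t with h | h
      · exact ⟨2 * t + 1, by omega, key t (by rw [if_pos hgr]; exact h)⟩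
      · exact ⟨2 * (t + 1) + 1, by omega, key (t + 1) (by rw [if_pos hgr]; exact h)⟩
    · rcases mvB_or N phi A w u0 v0 t with h | h
      · exact ⟨2 * t + 1, by omega, key t (by rw [if_neg hgr]; exact h)⟩
      · exact ⟨2 * (t + 1) + 1, by omega, key (t + 1) (by rw [if_neg hgr]; exact h)⟩
  · -- initial configuration
    apply Config.ext'
    · funext r
      have h02 : (0 : ℕ) / 2 = 0 := by omega
      by_cases h : g r = true
      · rw [hposA 0 r h, h02, Un_zero]
        exact (of_decide_eq_true h).symm
      · rw [hposB 0 r h, h02, Vn_zero]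
        rcases hclass _ ⟨r, rfl⟩ with h' | h'
        · exact absurd (decide_eq_true h') h
        · exact h'.symm
    · funext r
      exact hmono rA r
  · -- no gathering
    rintro ⟨t, x, hx⟩
    have h1 : Un N phi A w u0 v0 (t / 2) = x := by
      have h := hx t le_rfl rA
      rwa [hposA t rA hgA] at h
    have h2 : Vn N phi A w u0 v0 (t / 2) = x := by
      have h := hx t le_rfl rB
      rwa [hposB t rB (by rw [hgB]; simp)] at h
    exact hne (t / 2) (h1.trans h2.symm)

end Gathering
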